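/- arXiv:2005.13411 — 2 statements merged into one kernel-verified Lean document; each statement's English description precedes it below -/
import Mathlib

section
/- Let g be a Kähler metric with Chern curvature R_{i j̄ k l̄} and let g̃ = e^f g. Then the tensor Q̃_{i j̄ k l̄} = R̃_{i j̄ k l̄} − g̃^{p q̄} T̃_{k p j̄} (conj T̃)_{l q ī} of the conformal metric equals e^f [ R_{i j̄ k l̄} − g_{k l̄} f_{i j̄} − f_k f_{l̄} g_{i j̄} − |∂f|² g_{k j̄} g_{i l̄} + f_k f_{j̄} g_{i l̄} + f_i f_{l̄} g_{k j̄} ], where f_{i j̄} = ∂_i ∂_{j̄} f, f_i = ∂_i f, f_{j̄} = ∂_{j̄} f, and |∂f|² = g^{p q̄} f_p f_{q̄}. -/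
/-- Conformal change of the tensor `Q` for a Kähler metric `g` and `g̃ = e^f g`:
`Q̃_{i j̄ k l̄} = R̃_{i j̄ k l̄} − g̃^{p q̄} T̃_{k p j̄} conj(T̃_{l q ī})
  = e^f [ R_{i j̄ k l̄} − g_{k l̄} f_{i j̄} − f_k f_{l̄} g_{i j̄} − |∂f|² g_{k j̄} g_{i l̄}
          + f_k f_{j̄} g_{i l̄} + f_i f_{l̄} g_{k j̄} ]`.

Local coordinates are modeled by a commutative ℂ-algebra `A` with derivations
`D i = ∂_i`, `Db j = ∂_{j̄}` and a conjugation ring homomorphism `σ`.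
`g i m = g_{i m̄}` is Kähler with inverse `ginv`; `E = e^f`, `D i E = f_i E`,
`Db i E = f_{ī} E`; `df i = f_i`, `dbf j = f_{j̄}`, `f_{i j̄} = Db j (df i)`,
`|∂f|² = ∑_{p,q} g^{p q̄} f_p f_{q̄}`.  The curvature of `g̃` is
`R̃_{i j̄ k l̄} = ∑ m, g̃_{m l̄}(−∂_{j̄} Γ̃_{ik}^m)` and the torsion is
`T̃_{i j k̄} = ∂_i g̃_{j k̄} − ∂_j g̃_{i k̄}`. -/
theorem stmt4 (n : ℕ) (A : Type*) [CommRing A] [Algebra ℂ A]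
    (D Db : Fin n → Derivation ℂ A A) (σ : A →+* A)
    (g ginv : Fin n → Fin n → A) (E Einv : A) (df dbf : Fin n → A)
    (hinv : ∀ i j, ∑ m, ginv j m * g i m = if i = j then (1 : A) else 0)
    (hKahler : ∀ k i m, D k (g i m) = D i (g k m))
    (hEinv : E * Einv = 1)
    (hE : ∀ i, D i E = df i * E)
    (hEb : ∀ i, Db i E = dbf i * E)
    (hσg : ∀ i j, σ (g i j) = g j i)
    (hσginv : ∀ i j, σ (ginv i j) = ginv j i)
    (hσdf : ∀ i, σ (df i) = dbf i)
    (hσE : σ E = E)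
    (hσD : ∀ i a, σ (D i a) = Db i (σ a))
    (hσDb : ∀ i a, σ (Db i a) = D i (σ a))
    (hcomm : ∀ i j a, D i (Db j a) = Db j (D i a)) :
    ∀ i j k l,
      ((∑ m, (E * g m l) *
          (-(Db j (∑ p, (Einv * ginv m p) * D i (E * g k p)))))
        - ∑ p, ∑ q, (Einv * ginv p q) *
            ((D k (E * g p j) - D p (E * g k j))
              * σ (D l (E * g q i) - D q (E * g l i))))
      = E * ((∑ m, g m l * (-(Db j (∑ p, ginv m p * D i (g k p)))))
          - g k l * Db j (df i)
          - df k * dbf l * g i j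
          - (∑ p, ∑ q, ginv p q * df p * dbf q) * (g k j * g i l)
          + df k * dbf j * g i l
          + df i * dbf l * g k j) := by

  intro i j k l
  have hinv' : ∀ i j, (∑ m, ginv m j * g m i) = if i = j then (1 : A) else 0 := by
    intro i j
    have := congrArg σ (hinv i j)
    simpa [map_sum, map_mul, hσg, hσginv, apply_ite σ] using this
  -- simplify the Christoffel-like inner sum
  have hGamma : ∀ m, (∑ p, (Einv * ginv m p) * D i (E * g k p))
      = (if k = m then df i else 0) + ∑ p, ginv m p * D i (g k p) := by
    intro m
    have h1 : ∀ p, (Einv * ginv m p) * D i (E * g k p)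
        = df i * (ginv m p * g k p) + ginv m p * D i (g k p) := by
      intro p
      calc (Einv * ginv m p) * D i (E * g k p)
          = (Einv * ginv m p) * (E * D i (g k p) + g k p * (df i * E)) := by
            rw [Derivation.leibniz, hE, smul_eq_mul, smul_eq_mul]
        _ = (E * Einv) * (df i * (ginv m p * g k p) + ginv m p * D i (g k p)) := by ring
        _ = df i * (ginv m p * g k p) + ginv m p * D i (g k p) := by
            rw [hEinv, one_mul]
    rw [Finset.sum_congr rfl fun p _ => h1 p, Finset.sum_add_distrib, ← Finset.mul_sum,
      hinv k m]
    congr 1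
    split_ifs <;> ring
  -- the curvature part
  have hFirst : (∑ m, (E * g m l) *
        (-(Db j (∑ p, (Einv * ginv m p) * D i (E * g k p)))))
      = E * (∑ m, g m l * (-(Db j (∑ p, ginv m p * D i (g k p)))))
        - E * (g k l * Db j (df i)) := by
    have hsummand : ∀ m, (E * g m l) *
        (-(Db j (∑ p, (Einv * ginv m p) * D i (E * g k p))))
        = E * (g m l * (-(Db j (∑ p, ginv m p * D i (g k p)))))
          - (if k = m then E * (g m l * Db j (df i)) else 0) := by
      intro m
      rw [hGamma m, map_add]
      have hite : Db j (if k = m then df i else 0) = if k = m then Db j (df i) else 0 := by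
        split_ifs <;> simp
      rw [hite]
      split_ifs <;> ring
    rw [Finset.sum_congr rfl fun m _ => hsummand m, Finset.sum_sub_distrib,
      Finset.sum_ite_eq, if_pos (Finset.mem_univ k), ← Finset.mul_sum]
  -- torsion factors
  have hT : ∀ p, D k (E * g p j) - D p (E * g k j) = E * (df k * g p j - df p * g k j) := by
    intro p
    rw [Derivation.leibniz, Derivation.leibniz, hE, hE, smul_eq_mul, smul_eq_mul,
      smul_eq_mul, smul_eq_mul, hKahler k p j]
    ring
  have hTσ : ∀ q, σ (D l (E * g q i) - D q (E * g l i))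
      = E * (dbf l * g i q - dbf q * g i l) := by
    intro q
    have h1 : D l (E * g q i) - D q (E * g l i) = E * (df l * g q i - df q * g l i) := by
      rw [Derivation.leibniz, Derivation.leibniz, hE, hE, smul_eq_mul, smul_eq_mul,
        smul_eq_mul, smul_eq_mul, hKahler l q i]
      ring
    rw [h1, map_mul, map_sub, map_mul, map_mul, hσE, hσdf, hσdf, hσg, hσg]
  -- torsion summand
  have hstep : ∀ p q, (Einv * ginv p q) *
      ((D k (E * g p j) - D p (E * g k j)) * σ (D l (E * g q i) - D q (E * g l i)))
      = E * (df k * dbf l * ((ginv p q * g p j) * g i q)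
           - (df k * dbf q * g i l) * (ginv p q * g p j)
           - (df p * dbf l * g k j) * (ginv p q * g i q)
           + (ginv p q * df p * dbf q) * (g k j * g i l)) := by
    intro p q
    rw [hT p, hTσ q]
    calc (Einv * ginv p q) * ((E * (df k * g p j - df p * g k j))
          * (E * (dbf l * g i q - dbf q * g i l)))
        = (E * Einv) * (E * (df k * dbf l * ((ginv p q * g p j) * g i q)
           - (df k * dbf q * g i l) * (ginv p q * g p j)
           - (df p * dbf l * g k j) * (ginv p q * g i q)
           + (ginv p q * df p * dbf q) * (g k j * g i l))) := by ring
      _ = _ := by rw [hEinv, one_mul]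
  -- the four collapsed double sums
  have hS1 : (∑ p, ∑ q, df k * dbf l * ((ginv p q * g p j) * g i q))
      = df k * dbf l * g i j := by
    rw [Finset.sum_comm]
    have e1 : ∀ q, (∑ p, df k * dbf l * ((ginv p q * g p j) * g i q))
        = if j = q then df k * dbf l * g i q else 0 := by
      intro q
      have : (∑ p, df k * dbf l * ((ginv p q * g p j) * g i q))
          = (df k * dbf l * g i q) * ∑ p, ginv p q * g p j := by
        rw [Finset.mul_sum]; exact Finset.sum_congr rfl fun p _ => by ring
      rw [this, hinv']
      split_ifs <;> ring
    rw [Finset.sum_congr rfl fun q _ => e1 q, Finset.sum_ite_eq,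
      if_pos (Finset.mem_univ j)]
  have hS2 : (∑ p, ∑ q, (df k * dbf q * g i l) * (ginv p q * g p j))
      = df k * dbf j * g i l := by
    rw [Finset.sum_comm]
    have e2 : ∀ q, (∑ p, (df k * dbf q * g i l) * (ginv p q * g p j))
        = if j = q then df k * dbf q * g i l else 0 := by
      intro q
      have : (∑ p, (df k * dbf q * g i l) * (ginv p q * g p j))
          = (df k * dbf q * g i l) * ∑ p, ginv p q * g p j := by
        rw [Finset.mul_sum]
      rw [this, hinv']
      split_ifs <;> ring
    rw [Finset.sum_congr rfl fun q _ => e2 q, Finset.sum_ite_eq,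
      if_pos (Finset.mem_univ j)]
  have hS3 : (∑ p, ∑ q, (df p * dbf l * g k j) * (ginv p q * g i q))
      = df i * dbf l * g k j := by
    have e3 : ∀ p, (∑ q, (df p * dbf l * g k j) * (ginv p q * g i q))
        = if i = p then df p * dbf l * g k j else 0 := by
      intro p
      have : (∑ q, (df p * dbf l * g k j) * (ginv p q * g i q))
          = (df p * dbf l * g k j) * ∑ q, ginv p q * g i q := by
        rw [Finset.mul_sum]
      rw [this, hinv]
      split_ifs <;> ring
    rw [Finset.sum_congr rfl fun p _ => e3 p, Finset.sum_ite_eq,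
      if_pos (Finset.mem_univ i)]
  have hS4 : (∑ p, ∑ q, (ginv p q * df p * dbf q) * (g k j * g i l))
      = (∑ p, ∑ q, ginv p q * df p * dbf q) * (g k j * g i l) := by
    rw [Finset.sum_mul]
    exact Finset.sum_congr rfl fun p _ => by rw [Finset.sum_mul]
  -- the torsion part
  have hTor : (∑ p, ∑ q, (Einv * ginv p q) *
      ((D k (E * g p j) - D p (E * g k j)) * σ (D l (E * g q i) - D q (E * g l i))))
      = E * (df k * dbf l * g i j - df k * dbf j * g i l - df i * dbf l * g k j
          + (∑ p, ∑ q, ginv p q * df p * dbf q) * (g k j * g i l)) := by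
    rw [Finset.sum_congr rfl fun p _ => Finset.sum_congr rfl fun q _ => hstep p q]
    have hsplit : (∑ p, ∑ q, E * (df k * dbf l * ((ginv p q * g p j) * g i q)
           - (df k * dbf q * g i l) * (ginv p q * g p j)
           - (df p * dbf l * g k j) * (ginv p q * g i q)
           + (ginv p q * df p * dbf q) * (g k j * g i l)))
        = E * ((∑ p, ∑ q, df k * dbf l * ((ginv p q * g p j) * g i q))
             - (∑ p, ∑ q, (df k * dbf q * g i l) * (ginv p q * g p j))
             - (∑ p, ∑ q, (df p * dbf l * g k j) * (ginv p q * g i q))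
             + (∑ p, ∑ q, (ginv p q * df p * dbf q) * (g k j * g i l))) := by
      simp only [mul_sub, mul_add, Finset.sum_sub_distrib, Finset.sum_add_distrib,
        ← Finset.mul_sum]
    rw [hsplit, hS1, hS2, hS3, hS4]
  rw [hFirst, hTor]
  ring
end

section
/- Let g be the metric with potential: g_{i j̄} = c φ^{-1} φ_{i j̄} where φ > 0 is smooth and c > 0, and suppose (i∂∂̄φ) is a Kähler metric. Then the Q-tensor of g satisfies Q_{i j̄ k l̄} = c φ^{-1} [ R^{φ}_{i j̄ k l̄} + φ_{k l̄} φ_{i j̄}/φ − φ_{k l̄} φ_i φ_{j̄}/φ² − φ_{i j̄} φ_k φ_{l̄}/φ² − |∂ log φ|²_{i∂∂̄φ} φ_{k j̄} φ_{i l̄} + φ_{i l̄} φ_k φ_{j̄}/φ² + φ_{k j̄} φ_i φ_{l̄}/φ² ], where R^{φ} is the Chern curvature of i∂∂̄φ. In particular Q_{i j̄ k l̄} = Q_{k l̄ i j̄}. -/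
noncomputable section

/-- Chern connection coefficients `Γ_{ki}^j = ∑ m, g^{j m̄} ∂_k g_{i m̄}`. -/
def Gam {n : ℕ} {A : Type*} [CommRing A] [Algebra ℂ A]
    (D : Fin n → Derivation ℂ A A) (g ginv : Fin n → Fin n → A)
    (k i j : Fin n) : A := ∑ m, ginv j m * D k (g i m)

/-- Chern torsion (lowered): `T_{i m l̄} = ∂_i g_{m l̄} − ∂_m g_{i l̄}`. -/
def Tor {n : ℕ} {A : Type*} [CommRing A] [Algebra ℂ A]
    (D : Fin n → Derivation ℂ A A) (g : Fin n → Fin n → A)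
    (i m l : Fin n) : A := D i (g m l) - D m (g i l)

/-- Chern curvature `R_{i j̄ k l̄} = ∑ m, g_{m l̄} (−∂_{j̄} Γ_{ik}^m)`. -/
def ChernR {n : ℕ} {A : Type*} [CommRing A] [Algebra ℂ A]
    (D Db : Fin n → Derivation ℂ A A) (g ginv : Fin n → Fin n → A)
    (i j k l : Fin n) : A := ∑ m, g m l * (-(Db j (Gam D g ginv i k m)))

/-- The `Q`-tensor `Q_{i j̄ k l̄} = R_{i j̄ k l̄} − ∑_{p,q} g^{p q̄} T_{k p j̄} conj(T_{l q ī})`. -/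
def Qtensor {n : ℕ} {A : Type*} [CommRing A] [Algebra ℂ A]
    (D Db : Fin n → Derivation ℂ A A) (σ : A →+* A) (g ginv : Fin n → Fin n → A)
    (i j k l : Fin n) : A :=
  ChernR D Db g ginv i j k l
    - ∑ p, ∑ q, ginv p q * Tor D g k p j * σ (Tor D g l q i)

/-- For the metric with potential `g_{i j̄} = c φ⁻¹ φ_{i j̄}` (with `φ_{i j̄} = ∂_i∂_{j̄}φ`
the components of the Kähler metric `i∂∂̄φ`, with inverse `gφinv`, and `c` a constant),
the `Q`-tensor of `g` satisfies
`Q_{i j̄ k l̄} = c φ⁻¹ [ R^φ_{i j̄ k l̄} + φ_{k l̄}φ_{i j̄}/φ − φ_{k l̄}φ_i φ_{j̄}/φ²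
  − φ_{i j̄}φ_k φ_{l̄}/φ² − |∂ log φ|²_{i∂∂̄φ} φ_{k j̄}φ_{i l̄}
  + φ_{i l̄}φ_k φ_{j̄}/φ² + φ_{k j̄}φ_i φ_{l̄}/φ² ]`,
where `R^φ` is the Chern curvature of `i∂∂̄φ`.  In particular `Q_{i j̄ k l̄} = Q_{k l̄ i j̄}`.
Local coordinates are modeled by a commutative ℂ-algebra `A` with commuting derivations
`D i = ∂_i`, `Db j = ∂_{j̄}` and a conjugation `σ`; positivity of `φ, c` is recorded by
invertibility and reality under `σ`. -/
theorem stmt10 (n : ℕ) (A : Type*) [CommRing A] [Algebra ℂ A]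
    (D Db : Fin n → Derivation ℂ A A) (σ : A →+* A)
    (φ φinv c cinv : A) (gφinv : Fin n → Fin n → A)
    (hφ : φ * φinv = 1) (hc : c * cinv = 1)
    (hDc : ∀ i, D i c = 0) (hDbc : ∀ i, Db i c = 0)
    (hgφinv : ∀ i j, ∑ m, gφinv j m * Db m (D i φ) = if i = j then (1 : A) else 0)
    (hgφinv' : ∀ i j, ∑ m, Db m (D j φ) * gφinv i m = if i = j then (1 : A) else 0)
    (hσφ : σ φ = φ) (hσφinv : σ φinv = φinv) (hσc : σ c = c) (hσcinv : σ cinv = cinv)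
    (hσgφinv : ∀ i j, σ (gφinv i j) = gφinv j i)
    (hσD : ∀ i a, σ (D i a) = Db i (σ a))
    (hσDb : ∀ i a, σ (Db i a) = D i (σ a))
    (hDD : ∀ i j a, D i (D j a) = D j (D i a))
    (hDbDb : ∀ i j a, Db i (Db j a) = Db j (Db i a))
    (hcomm : ∀ i j a, D i (Db j a) = Db j (D i a)) :
    -- `g` is the Vaisman-type metric and `gφ` the Kähler metric `i∂∂̄φ`
    ∀ i j k l,
      (Qtensor D Db σ (fun i j => c * φinv * Db j (D i φ))
          (fun i j => cinv * φ * gφinv i j) i j k l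
        = c * φinv *
          (ChernR D Db (fun i j => Db j (D i φ)) gφinv i j k l
            + φinv * (Db l (D k φ) * Db j (D i φ))
            - φinv * φinv * (Db l (D k φ) * D i φ * Db j φ)
            - φinv * φinv * (Db j (D i φ) * D k φ * Db l φ)
            - (∑ p, ∑ q, gφinv p q * (φinv * D p φ) * (φinv * Db q φ))
                * (Db j (D k φ) * Db l (D i φ))
            + φinv * φinv * (Db l (D i φ) * D k φ * Db j φ)
            + φinv * φinv * (Db j (D k φ) * D i φ * Db l φ)))
      ∧ Qtensor D Db σ (fun i j => c * φinv * Db j (D i φ))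
          (fun i j => cinv * φ * gφinv i j) i j k l
        = Qtensor D Db σ (fun i j => c * φinv * Db j (D i φ))
          (fun i j => cinv * φ * gφinv i j) k l i j := by

  have leib : ∀ (E : Derivation ℂ A A) (a b : A), E (a * b) = a * E b + b * E a := by
    intro E a b; simpa [smul_eq_mul] using E.leibniz a b
  have hφ' : φinv * φ = 1 := by rw [mul_comm]; exact hφ
  have hDφinv : ∀ k, D k φinv = -(φinv * φinv * D k φ) := by
    intro k
    have h1 : φ * D k φinv + φinv * D k φ = 0 := by
      rw [← leib (D k) φ φinv, hφ]; exact (D k).map_one_eq_zero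
    linear_combination φinv * h1 - D k φinv * hφ'
  have hDbφinv : ∀ k, Db k φinv = -(φinv * φinv * Db k φ) := by
    intro k
    have h1 : φ * Db k φinv + φinv * Db k φ = 0 := by
      rw [← leib (Db k) φ φinv, hφ]; exact (Db k).map_one_eq_zero
    linear_combination φinv * h1 - Db k φinv * hφ'
  have hK3 : ∀ i j, ∑ m, gφinv m j * Db i (D m φ) = if i = j then (1 : A) else 0 := by
    intro i j
    calc ∑ m, gφinv m j * Db i (D m φ) = ∑ m, σ (gφinv j m * Db m (D i φ)) := by
          refine Finset.sum_congr rfl fun m _ => ?_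
          rw [map_mul, hσgφinv, hσDb, hσD, hσφ, hcomm]
      _ = σ (∑ m, gφinv j m * Db m (D i φ)) := (map_sum σ _ _).symm
      _ = σ (if i = j then 1 else 0) := by rw [hgφinv]
      _ = if i = j then 1 else 0 := by split <;> simp
  have hK4 : ∀ i j, ∑ m, Db j (D m φ) * gφinv m i = if i = j then (1 : A) else 0 := by
    intro i j
    calc ∑ m, Db j (D m φ) * gφinv m i = ∑ m, σ (Db m (D j φ) * gφinv i m) := by
          refine Finset.sum_congr rfl fun m _ => ?_
          rw [map_mul, hσgφinv, hσDb, hσD, hσφ, hcomm]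
      _ = σ (∑ m, Db m (D j φ) * gφinv i m) := (map_sum σ _ _).symm
      _ = σ (if i = j then 1 else 0) := by rw [hgφinv']
      _ = if i = j then 1 else 0 := by split <;> simp
  have hsymD : ∀ a b j', D a (Db j' (D b φ)) = D b (Db j' (D a φ)) := by
    intro a b j'
    rw [hcomm a j', hcomm b j']
    exact congrArg _ (hDD a b φ)
  have hDg : ∀ (a : Fin n) (x : A), D a (c * φinv * x)
      = c * φinv * D a x - c * (φinv * φinv) * (D a φ * x) := by
    intro a x
    rw [mul_assoc, leib (D a) c (φinv * x), leib (D a) φinv x, hDc, hDφinv]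
    ring
  have hTor : ∀ a b j', Tor D (fun i j => c * φinv * Db j (D i φ)) a b j'
      = c * (φinv * φinv) * (D b φ * Db j' (D a φ) - D a φ * Db j' (D b φ)) := by
    intro a b j'
    simp only [Tor]
    rw [hDg, hDg, hsymD a b j']
    ring
  have hσTor : ∀ a b i', σ (Tor D (fun i j => c * φinv * Db j (D i φ)) a b i')
      = c * (φinv * φinv) * (Db b φ * Db a (D i' φ) - Db a φ * Db b (D i' φ)) := by
    intro a b i'
    rw [hTor]
    simp only [map_mul, map_sub, hσc, hσφinv, hσD, hσDb, hσφ, hcomm]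
  have hGamg : ∀ i' k' m', Gam D (fun i j => c * φinv * Db j (D i φ))
        (fun i j => cinv * φ * gφinv i j) i' k' m'
      = Gam D (fun i j => Db j (D i φ)) gφinv i' k' m'
        + φ * D i' φinv * (if k' = m' then 1 else 0) := by
    intro i' k' m'
    simp only [Gam]
    have e : ∀ r, cinv * φ * gφinv m' r * D i' (c * φinv * Db r (D k' φ))
        = gφinv m' r * D i' (Db r (D k' φ))
          + (φ * D i' φinv) * (gφinv m' r * Db r (D k' φ)) := by
      intro r
      rw [hDg, hDφinv]
      linear_combination (c * cinv * gφinv m' r * D i' (Db r (D k' φ))) * hφ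
        + (gφinv m' r * D i' (Db r (D k' φ))
            - φ * (φinv * φinv) * D i' φ * gφinv m' r * Db r (D k' φ)) * hc
    calc ∑ r, cinv * φ * gφinv m' r * D i' (c * φinv * Db r (D k' φ))
        = ∑ r, (gφinv m' r * D i' (Db r (D k' φ))
            + (φ * D i' φinv) * (gφinv m' r * Db r (D k' φ))) :=
          Finset.sum_congr rfl fun r _ => e r
      _ = (∑ r, gφinv m' r * D i' (Db r (D k' φ)))
            + (φ * D i' φinv) * (∑ r, gφinv m' r * Db r (D k' φ)) := by
          rw [Finset.sum_add_distrib, Finset.mul_sum]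
      _ = _ := by rw [hgφinv k' m']
  have hDbφDφinv : ∀ i' j', Db j' (φ * D i' φinv)
      = φinv * φinv * (D i' φ * Db j' φ) - φinv * Db j' (D i' φ) := by
    intro i' j'
    rw [leib (Db j') φ (D i' φinv), hDφinv i', map_neg,
      leib (Db j') (φinv * φinv) (D i' φ), leib (Db j') φinv φinv, hDbφinv]
    linear_combination (2 * (φinv * φinv) * (D i' φ * Db j' φ) - φinv * Db j' (D i' φ)) * hφ
  have hRg : ∀ i j k l, ChernR D Db (fun i j => c * φinv * Db j (D i φ))
        (fun i j => cinv * φ * gφinv i j) i j k l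
      = c * φinv * ChernR D Db (fun i j => Db j (D i φ)) gφinv i j k l
        + c * (φinv * φinv) * (Db l (D k φ) * Db j (D i φ))
        - c * (φinv * φinv * φinv) * (Db l (D k φ) * D i φ * Db j φ) := by
    intro i j k l
    simp only [ChernR]
    have e : ∀ m, c * φinv * Db l (D m φ)
          * (-(Db j (Gam D (fun i j => c * φinv * Db j (D i φ))
              (fun i j => cinv * φ * gφinv i j) i k m)))
        = c * φinv * (Db l (D m φ)
            * (-(Db j (Gam D (fun i j => Db j (D i φ)) gφinv i k m))))
          - (if k = m then (c * φinv * Db l (D m φ)) * Db j (φ * D i φinv) else 0) := by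
      intro m
      rw [hGamg, map_add, mul_ite, mul_one, mul_zero, apply_ite (Db j), map_zero]
      by_cases hkm : k = m <;> simp [hkm] <;> ring
    calc ∑ m, c * φinv * Db l (D m φ)
          * (-(Db j (Gam D (fun i j => c * φinv * Db j (D i φ))
              (fun i j => cinv * φ * gφinv i j) i k m)))
        = ∑ m, (c * φinv * (Db l (D m φ)
            * (-(Db j (Gam D (fun i j => Db j (D i φ)) gφinv i k m))))
          - (if k = m then (c * φinv * Db l (D m φ)) * Db j (φ * D i φinv) else 0)) :=
          Finset.sum_congr rfl fun m _ => e m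
      _ = c * φinv * (∑ m, Db l (D m φ)
            * (-(Db j (Gam D (fun i j => Db j (D i φ)) gφinv i k m))))
          - (c * φinv * Db l (D k φ)) * Db j (φ * D i φinv) := by
          rw [Finset.sum_sub_distrib, ← Finset.mul_sum, Finset.sum_ite_eq]
          simp
      _ = _ := by rw [hDbφDφinv]; ring
  have key : ∀ (G X Y : A), (cinv * φ * G) * (c * (φinv * φinv) * X) * (c * (φinv * φinv) * Y)
      = c * (φinv * φinv * φinv) * (G * (X * Y)) := by
    intro G X Y
    linear_combination (c * (φinv * φinv * φinv) * (G * (X * Y)) * (c * cinv)) * hφ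
      + (c * (φinv * φinv * φinv) * (G * (X * Y))) * hc
  have hTT : ∀ i j k l,
      (∑ p, ∑ q, (cinv * φ * gφinv p q)
        * Tor D (fun i j => c * φinv * Db j (D i φ)) k p j
        * σ (Tor D (fun i j => c * φinv * Db j (D i φ)) l q i))
      = c * (φinv * φinv * φinv)
        * ((∑ p, ∑ q, gφinv p q * D p φ * Db q φ) * (Db j (D k φ) * Db l (D i φ))
          - D i φ * Db l φ * Db j (D k φ)
          - D k φ * Db j φ * Db l (D i φ)
          + D k φ * Db l φ * Db j (D i φ)) := by
    intro i j k l
    have e : ∀ p q, (cinv * φ * gφinv p q)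
          * Tor D (fun i j => c * φinv * Db j (D i φ)) k p j
          * σ (Tor D (fun i j => c * φinv * Db j (D i φ)) l q i)
        = c * (φinv * φinv * φinv) *
            ((gφinv p q * D p φ * Db q φ) * (Db j (D k φ) * Db l (D i φ))
            - (Db l φ * Db j (D k φ)) * (D p φ * (gφinv p q * Db q (D i φ)))
            - (D k φ * Db l (D i φ)) * ((gφinv p q * Db j (D p φ)) * Db q φ)
            + (D k φ * Db l φ) * ((gφinv p q * Db j (D p φ)) * Db q (D i φ))) := by
      intro p q
      rw [hTor, hσTor, key]
      ring
    have hT1 : (∑ p, ∑ q, (gφinv p q * D p φ * Db q φ) * (Db j (D k φ) * Db l (D i φ)))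
        = (∑ p, ∑ q, gφinv p q * D p φ * Db q φ) * (Db j (D k φ) * Db l (D i φ)) := by
      simp only [Finset.sum_mul]
    have hT2 : (∑ p, ∑ q, (Db l φ * Db j (D k φ)) * (D p φ * (gφinv p q * Db q (D i φ))))
        = (Db l φ * Db j (D k φ)) * D i φ := by
      have inner : ∀ p, (∑ q, (Db l φ * Db j (D k φ)) * (D p φ * (gφinv p q * Db q (D i φ))))
          = (Db l φ * Db j (D k φ)) * (D p φ * (if i = p then 1 else 0)) := by
        intro p
        rw [← Finset.mul_sum, ← Finset.mul_sum, hgφinv i p]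
      rw [Finset.sum_congr rfl fun p _ => inner p]
      simp [mul_ite, Finset.sum_ite_eq]
    have hT3 : (∑ p, ∑ q, (D k φ * Db l (D i φ)) * ((gφinv p q * Db j (D p φ)) * Db q φ))
        = (D k φ * Db l (D i φ)) * Db j φ := by
      rw [Finset.sum_comm]
      have inner : ∀ q, (∑ p, (D k φ * Db l (D i φ)) * ((gφinv p q * Db j (D p φ)) * Db q φ))
          = (D k φ * Db l (D i φ)) * ((if j = q then 1 else 0) * Db q φ) := by
        intro q
        rw [← Finset.mul_sum, ← Finset.sum_mul, hK3 j q]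
      rw [Finset.sum_congr rfl fun q _ => inner q]
      simp [ite_mul, Finset.sum_ite_eq]
    have hT4 : (∑ p, ∑ q, (D k φ * Db l φ) * ((gφinv p q * Db j (D p φ)) * Db q (D i φ)))
        = (D k φ * Db l φ) * Db j (D i φ) := by
      rw [Finset.sum_comm]
      have inner : ∀ q, (∑ p, (D k φ * Db l φ) * ((gφinv p q * Db j (D p φ)) * Db q (D i φ)))
          = (D k φ * Db l φ) * ((if j = q then 1 else 0) * Db q (D i φ)) := by
        intro q
        rw [← Finset.mul_sum, ← Finset.sum_mul, hK3 j q]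
      rw [Finset.sum_congr rfl fun q _ => inner q]
      simp [ite_mul, Finset.sum_ite_eq]
    calc (∑ p, ∑ q, (cinv * φ * gφinv p q)
          * Tor D (fun i j => c * φinv * Db j (D i φ)) k p j
          * σ (Tor D (fun i j => c * φinv * Db j (D i φ)) l q i))
        = ∑ p, ∑ q, (c * (φinv * φinv * φinv) *
            ((gφinv p q * D p φ * Db q φ) * (Db j (D k φ) * Db l (D i φ)))
          - c * (φinv * φinv * φinv) *
            ((Db l φ * Db j (D k φ)) * (D p φ * (gφinv p q * Db q (D i φ))))
          - c * (φinv * φinv * φinv) *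
            ((D k φ * Db l (D i φ)) * ((gφinv p q * Db j (D p φ)) * Db q φ))
          + c * (φinv * φinv * φinv) *
            ((D k φ * Db l φ) * ((gφinv p q * Db j (D p φ)) * Db q (D i φ)))) := by
          refine Finset.sum_congr rfl fun p _ => Finset.sum_congr rfl fun q _ => ?_
          rw [e p q]; ring
      _ = c * (φinv * φinv * φinv) *
            (∑ p, ∑ q, (gφinv p q * D p φ * Db q φ) * (Db j (D k φ) * Db l (D i φ)))
          - c * (φinv * φinv * φinv) *
            (∑ p, ∑ q, (Db l φ * Db j (D k φ)) * (D p φ * (gφinv p q * Db q (D i φ))))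
          - c * (φinv * φinv * φinv) *
            (∑ p, ∑ q, (D k φ * Db l (D i φ)) * ((gφinv p q * Db j (D p φ)) * Db q φ))
          + c * (φinv * φinv * φinv) *
            (∑ p, ∑ q, (D k φ * Db l φ) * ((gφinv p q * Db j (D p φ)) * Db q (D i φ))) := by
          simp only [Finset.sum_add_distrib, Finset.sum_sub_distrib, Finset.mul_sum]
      _ = _ := by rw [hT1, hT2, hT3, hT4]; ring
  have hDginvContr : ∀ (j' r l' : Fin n),
      (∑ m, Db l' (D m φ) * Db j' (gφinv m r))
      = -∑ m, gφinv m r * Db j' (Db l' (D m φ)) := by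
    intro j' r l'
    have h0 := congrArg (Db j') (hK4 r l')
    rw [map_sum, apply_ite (Db j'), map_zero, (Db j').map_one_eq_zero, ite_self] at h0
    have h1 : (∑ m, (Db l' (D m φ) * Db j' (gφinv m r)
        + gφinv m r * Db j' (Db l' (D m φ)))) = 0 := by
      rw [← h0]
      exact Finset.sum_congr rfl fun m _ => (leib (Db j') (Db l' (D m φ)) (gφinv m r)).symm
    rw [Finset.sum_add_distrib] at h1
    linear_combination h1
  have hRphi : ∀ i j k l, ChernR D Db (fun i j => Db j (D i φ)) gφinv i j k l
      = -(Db j (D i (Db l (D k φ))))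
        + ∑ r, ∑ m, gφinv m r * Db j (Db l (D m φ)) * D i (Db r (D k φ)) := by
    intro i j k l
    simp only [ChernR, Gam]
    have e : ∀ m, Db l (D m φ) * (-(Db j (∑ r, gφinv m r * D i (Db r (D k φ)))))
        = ∑ r, (-((Db l (D m φ) * gφinv m r) * Db j (D i (Db r (D k φ))))
            - D i (Db r (D k φ)) * (Db l (D m φ) * Db j (gφinv m r))) := by
      intro m
      rw [map_sum, mul_neg, Finset.mul_sum, ← Finset.sum_neg_distrib]
      refine Finset.sum_congr rfl fun r _ => ?_
      rw [leib (Db j) (gφinv m r) (D i (Db r (D k φ)))]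
      ring
    calc (∑ m, Db l (D m φ) * (-(Db j (∑ r, gφinv m r * D i (Db r (D k φ))))))
        = ∑ m, ∑ r, (-((Db l (D m φ) * gφinv m r) * Db j (D i (Db r (D k φ))))
            - D i (Db r (D k φ)) * (Db l (D m φ) * Db j (gφinv m r))) :=
          Finset.sum_congr rfl fun m _ => e m
      _ = ∑ r, ∑ m, (-((Db l (D m φ) * gφinv m r) * Db j (D i (Db r (D k φ))))
            - D i (Db r (D k φ)) * (Db l (D m φ) * Db j (gφinv m r))) := Finset.sum_comm
      _ = ∑ r, (-((∑ m, Db l (D m φ) * gφinv m r) * Db j (D i (Db r (D k φ))))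
            - D i (Db r (D k φ)) * (∑ m, Db l (D m φ) * Db j (gφinv m r))) := by
          refine Finset.sum_congr rfl fun r _ => ?_
          rw [Finset.sum_sub_distrib, Finset.sum_mul, Finset.mul_sum,
            ← Finset.sum_neg_distrib]
      _ = ∑ r, (-((if r = l then (1:A) else 0) * Db j (D i (Db r (D k φ))))
            + D i (Db r (D k φ)) * (∑ m, gφinv m r * Db j (Db l (D m φ)))) := by
          refine Finset.sum_congr rfl fun r _ => ?_
          rw [hK4 r l, hDginvContr j r l]
          ring
      _ = _ := by
          rw [Finset.sum_add_distrib]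
          congr 1
          · simp [ite_mul, Finset.sum_neg_distrib, Finset.sum_ite_eq']
          · refine Finset.sum_congr rfl fun r _ => ?_
            rw [Finset.mul_sum]
            refine Finset.sum_congr rfl fun m _ => by ring
  have hRsym : ∀ i j k l, ChernR D Db (fun i j => Db j (D i φ)) gφinv i j k l
      = ChernR D Db (fun i j => Db j (D i φ)) gφinv k l i j := by
    intro i j k l
    rw [hRphi i j k l, hRphi k l i j]
    congr 1
    · have h4 : Db j (D i (Db l (D k φ))) = Db l (D k (Db j (D i φ))) := by
        calc Db j (D i (Db l (D k φ)))
            = Db j (Db l (D i (D k φ))) := congrArg _ (hcomm i l (D k φ))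
          _ = Db l (Db j (D i (D k φ))) := hDbDb j l _
          _ = Db l (Db j (D k (D i φ))) := congrArg _ (congrArg _ (hDD i k φ))
          _ = Db l (D k (Db j (D i φ))) := (congrArg _ (hcomm k j (D i φ))).symm
      rw [h4]
    · refine Finset.sum_congr rfl fun r _ => Finset.sum_congr rfl fun m _ => ?_
      rw [hDbDb j l (D m φ), hsymD i k r]
  have hS : (∑ p, ∑ q, gφinv p q * (φinv * D p φ) * (φinv * Db q φ))
      = φinv * φinv * (∑ p, ∑ q, gφinv p q * D p φ * Db q φ) := by
    rw [Finset.mul_sum]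
    refine Finset.sum_congr rfl fun p _ => ?_
    rw [Finset.mul_sum]
    exact Finset.sum_congr rfl fun q _ => by ring
  have main : ∀ i j k l,
      Qtensor D Db σ (fun i j => c * φinv * Db j (D i φ))
          (fun i j => cinv * φ * gφinv i j) i j k l
        = c * φinv *
          (ChernR D Db (fun i j => Db j (D i φ)) gφinv i j k l
            + φinv * (Db l (D k φ) * Db j (D i φ))
            - φinv * φinv * (Db l (D k φ) * D i φ * Db j φ)
            - φinv * φinv * (Db j (D i φ) * D k φ * Db l φ)
            - (∑ p, ∑ q, gφinv p q * (φinv * D p φ) * (φinv * Db q φ))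
                * (Db j (D k φ) * Db l (D i φ))
            + φinv * φinv * (Db l (D i φ) * D k φ * Db j φ)
            + φinv * φinv * (Db j (D k φ) * D i φ * Db l φ)) := by
    intro i j k l
    simp only [Qtensor]
    rw [hRg i j k l, hTT i j k l, hS]
    ring
  intro i j k l
  refine ⟨main i j k l, ?_⟩
  rw [main i j k l, main k l i j, hRsym i j k l]
  ring
end
end
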